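/- Let P be a smooth manifold, D = D(P) the algebra of differential operators on P, R = C^∞(P), and extend scalars to formal power series in ℏ. An element F = 1⊗_R 1 + ℏB₁ + ℏ²B₂ + ⋯ ∈ (D ⊗_R D)[[ℏ]] (a formal series of bidifferential operators) is a twistor of the Hopf algebroid D[[ℏ]] if and only if the product f *_ℏ g := F(f, g) on R[[ℏ]] is associative with unit the constant function 1, i.e., *_ℏ is a star product on P. -/

import Mathlib

/-!
Write `F = ∑ ℏⁿ Bₙ`. Evaluated on functions, the cocycle identity
`(Δ ⊗ id)F · (F ⊗ 1) = (id ⊗ Δ)F · (1 ⊗ F)` reads, in order `ℏⁿ`,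
`∑_{a+b=n} B_a(B_b(f, g), h) = ∑_{a+b=n} B_a(f, B_b(g, h))`, and the counit identities read
`Bₙ(1, f) = Bₙ(f, 1) = δₙ₀ f`; since elements of `H`, `H ⊗_R H` and `H ⊗_R H ⊗_R H` are determined
by their values on functions, these identities are equivalent to the twistor axioms. They are
also equivalent to associativity and unitality of `f *_ℏ g = F(f, g)`: testing on constant series
gives one direction, regrouping the iterated Cauchy sums the other.
-/

open TensorProduct

noncomputable section

variable (k : Type) {H R : Type} [CommRing k] [Ring H] [Algebra k H] [Ring R] [Algebra k R]

/-- Relation submodule defining `H ⊗_R H` (source = target = `ι`). -/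
def relQ (af bf : R → H) : Submodule k (H ⊗[k] H) :=
  Submodule.span k {z | ∃ (a : R) (x y : H), z = (bf a * x) ⊗ₜ[k] y - x ⊗ₜ[k] (af a * y)}

abbrev HtQ (af bf : R → H) : Type _ := (H ⊗[k] H) ⧸ relQ k af bf

def prQ (af bf : R → H) : H ⊗[k] H →ₗ[k] HtQ k af bf := (relQ k af bf).mkQ

/-- Relation submodule for the triple product `H ⊗_R H ⊗_R H`. -/
def relQ3 (af bf : R → H) : Submodule k ((H ⊗[k] H) ⊗[k] H) :=
  Submodule.span k
    ({w | ∃ (a : R) (x y z : H),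
        w = ((bf a * x) ⊗ₜ[k] y) ⊗ₜ[k] z - (x ⊗ₜ[k] (af a * y)) ⊗ₜ[k] z} ∪
     {w | ∃ (a : R) (x y z : H),
        w = (x ⊗ₜ[k] (bf a * y)) ⊗ₜ[k] z - (x ⊗ₜ[k] y) ⊗ₜ[k] (af a * z)})

abbrev HtQ3 (af bf : R → H) : Type _ := ((H ⊗[k] H) ⊗[k] H) ⧸ relQ3 k af bf

def prQ3 (af bf : R → H) : (H ⊗[k] H) ⊗[k] H →ₗ[k] HtQ3 k af bf := (relQ3 k af bf).mkQ

/-- Representative-level `(Δ ⊗ id)`. -/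
def DL (Δ' : H →ₗ[k] H ⊗[k] H) : H ⊗[k] H →ₗ[k] (H ⊗[k] H) ⊗[k] H :=
  TensorProduct.map Δ' LinearMap.id

/-- Representative-level `(id ⊗ Δ)`. -/
def DR (Δ' : H →ₗ[k] H ⊗[k] H) : H ⊗[k] H →ₗ[k] (H ⊗[k] H) ⊗[k] H :=
  (TensorProduct.assoc k H H H).symm.toLinearMap ∘ₗ TensorProduct.map LinearMap.id Δ'

def aInv : H ⊗[k] (H ⊗[k] H) →ₗ[k] (H ⊗[k] H) ⊗[k] H :=
  (TensorProduct.assoc k H H H).symm.toLinearMap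

/-- Evaluation of a bidifferential operator on a pair of functions:
`(x ⊗ y)(f, g) = μ(x)(f) * μ(y)(g)`. -/
def ev2 (μ : H →ₐ[k] Module.End k R) :
    (H ⊗[k] H) →ₗ[k] R →ₗ[k] R →ₗ[k] R :=
  TensorProduct.lift (LinearMap.mk₂ k
    (fun x y => (LinearMap.mul k R).compl₁₂ (μ x : R →ₗ[k] R) (μ y : R →ₗ[k] R))
    (by intro x₁ x₂ y; apply LinearMap.ext; intro a; apply LinearMap.ext; intro b
        simp [map_add, add_mul])
    (by intro c x y; apply LinearMap.ext; intro a; apply LinearMap.ext; intro b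
        simp [map_smul, smul_mul_assoc])
    (by intro x y₁ y₂; apply LinearMap.ext; intro a; apply LinearMap.ext; intro b
        simp [map_add, mul_add])
    (by intro c x y; apply LinearMap.ext; intro a; apply LinearMap.ext; intro b
        simp [map_smul, mul_smul_comm]))

/-- Evaluation of a tridifferential operator on a triple of functions. -/
def ev3 (μ : H →ₐ[k] Module.End k R) :
    ((H ⊗[k] H) ⊗[k] H) →ₗ[k] R →ₗ[k] R →ₗ[k] R →ₗ[k] R :=
  TensorProduct.lift (LinearMap.mk₂ k
    (fun u w =>
      { toFun := fun f => (LinearMap.mul k R).compl₁₂ (ev2 k μ u f) (μ w : R →ₗ[k] R)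
        map_add' := by
          intro f₁ f₂; apply LinearMap.ext; intro g; apply LinearMap.ext; intro h
          simp [map_add, add_mul]
        map_smul' := by
          intro c f; apply LinearMap.ext; intro g; apply LinearMap.ext; intro h
          simp [map_smul, smul_mul_assoc] })
    (by intro u₁ u₂ w; apply LinearMap.ext; intro f; apply LinearMap.ext; intro g
        apply LinearMap.ext; intro h; simp [map_add, add_mul])
    (by intro c u w; apply LinearMap.ext; intro f; apply LinearMap.ext; intro g
        apply LinearMap.ext; intro h; simp [map_smul, smul_mul_assoc])
    (by intro u w₁ w₂; apply LinearMap.ext; intro f; apply LinearMap.ext; intro g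
        apply LinearMap.ext; intro h; simp [map_add, mul_add])
    (by intro c u w; apply LinearMap.ext; intro f; apply LinearMap.ext; intro g
        apply LinearMap.ext; intro h; simp [map_smul, mul_smul_comm]))

/-- `(ε ⊗_R id)`-type evaluation: `x ⊗ y ↦ ι(ε x) * y`. -/
def e1 (s : R →ₗ[k] H) (ε : H →ₗ[k] R) : (H ⊗[k] H) →ₗ[k] H :=
  TensorProduct.lift (LinearMap.mk₂ k
    (fun x y => s (ε x) * y)
    (by intro x₁ x₂ y; simp [map_add, add_mul])
    (by intro c x y; simp [map_smul, smul_mul_assoc])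
    (by intro x y₁ y₂; simp [mul_add])
    (by intro c x y; simp [mul_smul_comm]))

/-- `(id ⊗_R ε)`-type evaluation: `x ⊗ y ↦ ι(ε y) * x`. -/
def e2 (s : R →ₗ[k] H) (ε : H →ₗ[k] R) : (H ⊗[k] H) →ₗ[k] H :=
  TensorProduct.lift (LinearMap.mk₂ k
    (fun x y => s (ε y) * x)
    (by intro x₁ x₂ y; simp [mul_add])
    (by intro c x y; simp [mul_smul_comm])
    (by intro x y₁ y₂; simp [map_add, add_mul])
    (by intro c x y; simp [map_smul, smul_mul_assoc]))

/-- The star product on `R[[ℏ]]` (formal series represented as coefficient functions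
`ℕ → R`) defined by a formal series `F = Σ ℏⁿ Bₙ` of bidifferential operators:
`f *_ℏ g = F(f, g)`. -/
def starC (μ : H →ₐ[k] Module.End k R) (B : ℕ → H ⊗[k] H) (f g : ℕ → R) : ℕ → R :=
  fun n => ∑ p ∈ Finset.HasAntidiagonal.antidiagonal n, ∑ q ∈ Finset.HasAntidiagonal.antidiagonal p.2,
    ev2 k μ (B p.1) (f q.1) (g q.2)

section GradedStar

open Finset

variable {K M : Type*} [CommSemiring K] [AddCommMonoid M] [Module K M]

/-- The product `(∑ ℏᵃ Eₐ)(f, g)` on `M[[ℏ]]`, with series stored as coefficient sequences. -/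
def gradedStar (E : ℕ → M →ₗ[K] M →ₗ[K] M) (f g : ℕ → M) : ℕ → M :=
  fun n => ∑ p ∈ antidiagonal n, ∑ q ∈ antidiagonal p.2, E p.1 (f q.1) (g q.2)

theorem sum_antidiagonal_eq_of_fst_ne_zero {N : Type*} [AddCommMonoid N] {F : ℕ × ℕ → N}
    (n : ℕ) (hF : ∀ p : ℕ × ℕ, p.1 ≠ 0 → F p = 0) : ∑ p ∈ antidiagonal n, F p = F (0, n) :=
  sum_eq_single_of_mem (0, n) (by simp) fun p hp hne =>
    hF p fun h => hne (Prod.ext h (by rw [HasAntidiagonal.mem_antidiagonal] at hp; simp_all))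

theorem sum_antidiagonal_eq_of_snd_ne_zero {N : Type*} [AddCommMonoid N] {F : ℕ × ℕ → N}
    (n : ℕ) (hF : ∀ p : ℕ × ℕ, p.2 ≠ 0 → F p = 0) : ∑ p ∈ antidiagonal n, F p = F (n, 0) :=
  sum_eq_single_of_mem (n, 0) (by simp) fun p hp hne =>
    hF p fun h => hne (Prod.ext (by rw [HasAntidiagonal.mem_antidiagonal] at hp; simp_all) h)

variable (E : ℕ → M →ₗ[K] M →ₗ[K] M)

-- Both iterated products, regrouped by the total order `t.1 + t.2` of their two factors `E`.
theorem gradedStar_gradedStar_left (f g h : ℕ → M) (n : ℕ) :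
    gradedStar E (gradedStar E f g) h n =
      ∑ p ∈ antidiagonal n, ∑ q ∈ antidiagonal p.2, ∑ r ∈ antidiagonal q.1,
        ∑ t ∈ antidiagonal p.1, E t.1 (E t.2 (f r.1) (g r.2)) (h q.2) := by
  simp only [gradedStar, map_sum, LinearMap.sum_apply, sum_sigma']
  apply sum_nbij'
    (fun ⟨(a, _), (_, c), (a', v), (i, j)⟩ ↦ ⟨(a + a', v + c), (v, c), (i, j), (a, a')⟩)
    (fun ⟨_, (v, c), (i, j), (a, a')⟩ ↦ ⟨(a, a' + v + c), (a' + v, c), (a', v), (i, j)⟩) <;>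
    aesop (add simp [add_assoc, add_left_comm])

theorem gradedStar_gradedStar_right (f g h : ℕ → M) (n : ℕ) :
    gradedStar E f (gradedStar E g h) n =
      ∑ p ∈ antidiagonal n, ∑ q ∈ antidiagonal p.2, ∑ r ∈ antidiagonal q.1,
        ∑ t ∈ antidiagonal p.1, E t.1 (f r.1) (E t.2 (g r.2) (h q.2)) := by
  simp only [gradedStar, map_sum, sum_sigma']
  apply sum_nbij'
    (fun ⟨(a, _), (i, _), (a', _), (j, c)⟩ ↦ ⟨(a + a', i + j + c), (i + j, c), (i, j), (a, a')⟩)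
    (fun ⟨_, (_, c), (i, j), (a, a')⟩ ↦
      ⟨(a, i + (a' + j + c)), (i, a' + j + c), (a', j + c), (j, c)⟩) <;>
    aesop (add simp [add_assoc, add_left_comm])

theorem gradedStar_single_left (x : M) (g : ℕ → M) (n : ℕ) :
    gradedStar E (Pi.single 0 x) g n = ∑ p ∈ antidiagonal n, E p.1 x (g p.2) :=
  sum_congr rfl fun p _ => sum_antidiagonal_eq_of_fst_ne_zero p.2 fun q hq => by simp [hq]

theorem gradedStar_single_right (f : ℕ → M) (y : M) (n : ℕ) :
    gradedStar E f (Pi.single 0 y) n = ∑ p ∈ antidiagonal n, E p.1 (f p.2) y :=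
  sum_congr rfl fun p _ => sum_antidiagonal_eq_of_snd_ne_zero p.2 fun q hq => by simp [hq]

theorem gradedStar_single_single (x y : M) :
    gradedStar E (Pi.single 0 x) (Pi.single 0 y) = fun n => E n x y := by
  funext n
  rw [gradedStar_single_left]
  exact sum_antidiagonal_eq_of_snd_ne_zero n fun p hp => by simp [hp]

theorem gradedStar_assoc_iff :
    (∀ f g h : ℕ → M, gradedStar E (gradedStar E f g) h = gradedStar E f (gradedStar E g h)) ↔
      ∀ (n : ℕ) (x y z : M), ∑ p ∈ antidiagonal n, E p.1 (E p.2 x y) z =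
        ∑ p ∈ antidiagonal n, E p.1 x (E p.2 y z) := by
  constructor
  · intro hassoc n x y z
    simpa only [gradedStar_single_single, gradedStar_single_left, gradedStar_single_right] using
      congrFun (hassoc (Pi.single 0 x) (Pi.single 0 y) (Pi.single 0 z)) n
  · intro horder f g h
    funext n
    simp only [gradedStar_gradedStar_left, gradedStar_gradedStar_right, horder]

theorem gradedStar_single_left_eq_self_iff (e : M) :
    (∀ f : ℕ → M, gradedStar E (Pi.single 0 e) f = f) ↔
      ∀ (n : ℕ) (x : M), E n e x = if n = 0 then x else 0 := by
  constructor
  · intro hunit n x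
    simpa only [gradedStar_single_single, Pi.single_apply] using
      congrFun (hunit (Pi.single 0 x)) n
  · intro hE f
    funext n
    rw [gradedStar_single_left]
    simp only [hE]
    exact sum_antidiagonal_eq_of_fst_ne_zero n fun p hp => by simp [hp]

theorem gradedStar_single_right_eq_self_iff (e : M) :
    (∀ f : ℕ → M, gradedStar E f (Pi.single 0 e) = f) ↔
      ∀ (n : ℕ) (x : M), E n x e = if n = 0 then x else 0 := by
  constructor
  · intro hunit n x
    simpa only [gradedStar_single_single, Pi.single_apply] using
      congrFun (hunit (Pi.single 0 x)) n
  · intro hE f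
    funext n
    rw [gradedStar_single_right]
    simp only [hE]
    exact sum_antidiagonal_eq_of_fst_ne_zero n fun p hp => by simp [hp]

end GradedStar

section DifferentialOperators

variable {K A S : Type} [CommRing K] [Ring A] [Algebra K A] [CommRing S] [Algebra K S]
  (μ : A →ₐ[K] Module.End K S)

theorem ev2_tmul (x y : A) (f g : S) : ev2 K μ (x ⊗ₜ y) f g = μ x f * μ y g := rfl

theorem ev3_tmul (u : A ⊗[K] A) (z : A) (f g h : S) :
    ev3 K μ (u ⊗ₜ z) f g h = ev2 K μ u f g * μ z h := rfl

/-- `map_sub` does not fire here: no `AddCommGroup` instance is found on `S →ₗ S →ₗ S →ₗ S`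
built from the `AddCommMonoid` structures in the type of `ev3`. -/
theorem ev3_sub (U V : (A ⊗[K] A) ⊗[K] A) (f g h : S) :
    ev3 K μ (U - V) f g h = ev3 K μ U f g h - ev3 K μ V f g h := by
  rw [eq_sub_iff_add_eq, ← LinearMap.add_apply, ← LinearMap.add_apply, ← LinearMap.add_apply,
    ← map_add, sub_add_cancel]

theorem ev2_mul_tmul (w : A ⊗[K] A) (x y : A) (f g : S) :
    ev2 K μ (w * x ⊗ₜ y) f g = ev2 K μ w (μ x f) (μ y g) := by
  induction w using TensorProduct.induction_on with
  | zero => simp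
  | tmul a b => simp only [Algebra.TensorProduct.tmul_mul_tmul, ev2_tmul, map_mul]; rfl
  | add w₁ w₂ h₁ h₂ => simp only [add_mul, map_add, LinearMap.add_apply, h₁, h₂]

theorem ev3_aInv_tmul (x : A) (t : A ⊗[K] A) (f g h : S) :
    ev3 K μ (aInv K (x ⊗ₜ t)) f g h = μ x f * ev2 K μ t g h := by
  induction t using TensorProduct.induction_on with
  | zero => simp
  | tmul y z => exact (mul_assoc _ _ _)
  | add t₁ t₂ h₁ h₂ =>
    simp only [TensorProduct.tmul_add, map_add, LinearMap.add_apply, h₁, h₂, mul_add]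

theorem ev3_mul_aInv_one_tmul (U : (A ⊗[K] A) ⊗[K] A) (x y : A) (f g h : S) :
    ev3 K μ (U * aInv K (1 ⊗ₜ (x ⊗ₜ y))) f g h = ev3 K μ U f (μ x g) (μ y h) := by
  induction U using TensorProduct.induction_on with
  | zero => simp
  | tmul w z =>
    change ev3 K μ ((w ⊗ₜ z) * ((1 ⊗ₜ x) ⊗ₜ y)) f g h = _
    rw [Algebra.TensorProduct.tmul_mul_tmul, ev3_tmul, ev3_tmul, ev2_mul_tmul, map_mul, map_one]
    rfl
  | add U₁ U₂ h₁ h₂ => simp only [add_mul, map_add, LinearMap.add_apply, h₁, h₂]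

theorem ev3_mul_tmul_one (U : (A ⊗[K] A) ⊗[K] A) (x y : A) (f g h : S) :
    ev3 K μ (U * (x ⊗ₜ y) ⊗ₜ 1) f g h = ev3 K μ U (μ x f) (μ y g) h := by
  induction U using TensorProduct.induction_on with
  | zero => simp
  | tmul w z => rw [Algebra.TensorProduct.tmul_mul_tmul, ev3_tmul, ev3_tmul, ev2_mul_tmul, mul_one]
  | add U₁ U₂ h₁ h₂ => simp only [add_mul, map_add, LinearMap.add_apply, h₁, h₂]

variable {μ} {Δ' : A →ₗ[K] A ⊗[K] A}

theorem ev3_DL (hΔ : ∀ (D : A) (f g : S), ev2 K μ (Δ' D) f g = μ D (f * g))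
    (u : A ⊗[K] A) (f g h : S) : ev3 K μ (DL K Δ' u) f g h = ev2 K μ u (f * g) h := by
  induction u using TensorProduct.induction_on with
  | zero => simp
  | tmul x y => exact congrArg (· * μ y h) (hΔ x f g)
  | add u₁ u₂ h₁ h₂ => simp only [map_add, LinearMap.add_apply, h₁, h₂]

theorem ev3_DR (hΔ : ∀ (D : A) (f g : S), ev2 K μ (Δ' D) f g = μ D (f * g))
    (u : A ⊗[K] A) (f g h : S) : ev3 K μ (DR K Δ' u) f g h = ev2 K μ u f (g * h) := by
  induction u using TensorProduct.induction_on with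
  | zero => simp
  | tmul x y => exact (ev3_aInv_tmul μ x (Δ' y) f g h).trans (congrArg (μ x f * ·) (hΔ y g h))
  | add u₁ u₂ h₁ h₂ => simp only [map_add, LinearMap.add_apply, h₁, h₂]

theorem ev3_DL_mul_tmul_one (hΔ : ∀ (D : A) (f g : S), ev2 K μ (Δ' D) f g = μ D (f * g))
    (u v : A ⊗[K] A) (f g h : S) :
    ev3 K μ (DL K Δ' u * v ⊗ₜ 1) f g h = ev2 K μ u (ev2 K μ v f g) h := by
  induction v using TensorProduct.induction_on with
  | zero => simp
  | tmul x y => rw [ev3_mul_tmul_one, ev3_DL hΔ, ev2_tmul]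
  | add v₁ v₂ h₁ h₂ =>
    simp only [TensorProduct.add_tmul, mul_add, map_add, LinearMap.add_apply, h₁, h₂]

theorem ev3_DR_mul_aInv_one_tmul (hΔ : ∀ (D : A) (f g : S), ev2 K μ (Δ' D) f g = μ D (f * g))
    (u v : A ⊗[K] A) (f g h : S) :
    ev3 K μ (DR K Δ' u * aInv K (1 ⊗ₜ v)) f g h = ev2 K μ u f (ev2 K μ v g h) := by
  induction v using TensorProduct.induction_on with
  | zero => simp
  | tmul x y => rw [ev3_mul_aInv_one_tmul, ev3_DR hΔ, ev2_tmul]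
  | add v₁ v₂ h₁ h₂ =>
    simp only [TensorProduct.tmul_add, map_add, mul_add, LinearMap.add_apply, h₁, h₂]

variable {ι : S →ₐ[K] A}

theorem ev3_eq_zero_of_mem_relQ3 (hbl : ∀ (a : S) (h : A) (b : S), μ (ι a * h) b = a * μ h b)
    {w : (A ⊗[K] A) ⊗[K] A} (hw : w ∈ relQ3 K (fun a => ι a) (fun a => ι a)) (f g h : S) :
    ev3 K μ w f g h = 0 := by
  induction hw using Submodule.span_induction with
  | mem w hw =>
    rcases hw with ⟨a, x, y, z, rfl⟩ | ⟨a, x, y, z, rfl⟩ <;>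
      simp only [ev3_sub, ev3_tmul, ev2_tmul, hbl] <;> ring
  | zero => simp
  | add w₁ w₂ _ _ h₁ h₂ => simp [h₁, h₂]
  | smul c w _ h₁ => simp [h₁]

theorem prQ3_eq_iff (hbl : ∀ (a : S) (h : A) (b : S), μ (ι a * h) b = a * μ h b)
    (hfaith3 : ∀ u : (A ⊗[K] A) ⊗[K] A,
      (∀ f g h : S, ev3 K μ u f g h = 0) → prQ3 K (fun a => ι a) (fun a => ι a) u = 0)
    (U V : (A ⊗[K] A) ⊗[K] A) :
    prQ3 K (fun a => ι a) (fun a => ι a) U = prQ3 K (fun a => ι a) (fun a => ι a) V ↔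
      ∀ f g h : S, ev3 K μ U f g h = ev3 K μ V f g h := by
  rw [prQ3, Submodule.mkQ_apply, Submodule.mkQ_apply, Submodule.Quotient.eq]
  constructor
  · intro hUV f g h
    rw [← sub_eq_zero, ← ev3_sub]
    exact ev3_eq_zero_of_mem_relQ3 hbl hUV f g h
  · intro hUV
    refine (Submodule.Quotient.mk_eq_zero _).mp (hfaith3 _ fun f g h => ?_)
    rw [ev3_sub, hUV, sub_self]

variable {ε : A →ₗ[K] S}

theorem μ_e1_apply (hbl : ∀ (a : S) (h : A) (b : S), μ (ι a * h) b = a * μ h b)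
    (hε : ∀ D : A, ε D = μ D 1) (u : A ⊗[K] A) (x : S) :
    μ (e1 K ι.toLinearMap ε u) x = ev2 K μ u 1 x := by
  induction u using TensorProduct.induction_on with
  | zero => simp
  | tmul a b =>
    change μ (ι (ε a) * b) x = μ a 1 * μ b x
    rw [hbl, hε]
  | add u₁ u₂ h₁ h₂ => simp only [map_add, LinearMap.add_apply, h₁, h₂]

theorem μ_e2_apply (hbl : ∀ (a : S) (h : A) (b : S), μ (ι a * h) b = a * μ h b)
    (hε : ∀ D : A, ε D = μ D 1) (u : A ⊗[K] A) (x : S) :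
    μ (e2 K ι.toLinearMap ε u) x = ev2 K μ u x 1 := by
  induction u using TensorProduct.induction_on with
  | zero => simp
  | tmul a b =>
    change μ (ι (ε b) * a) x = μ a x * μ b 1
    rw [hbl, hε, mul_comm]
  | add u₁ u₂ h₁ h₂ => simp only [map_add, LinearMap.add_apply, h₁, h₂]

theorem e2_eq_zero_of_mem_relQ (hbl : ∀ (a : S) (h : A) (b : S), μ (ι a * h) b = a * μ h b)
    (hε : ∀ D : A, ε D = μ D 1) {u : A ⊗[K] A}
    (hu : u ∈ relQ K (fun a => ι a) (fun a => ι a)) : e2 K ι.toLinearMap ε u = 0 := by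
  induction hu using Submodule.span_induction with
  | mem u hu =>
    obtain ⟨a, x, y, rfl⟩ := hu
    have hει : ε (ι a * y) = a * ε y := by rw [hε, hε, hbl]
    rw [map_sub, sub_eq_zero]
    change ι (ε y) * (ι a * x) = ι (ε (ι a * y)) * x
    rw [hει, map_mul, ← mul_assoc, ← map_mul, ← map_mul, mul_comm]
  | zero => simp
  | add w₁ w₂ _ _ h₁ h₂ => simp [h₁, h₂]
  | smul c w _ h₁ => simp [h₁]

/-- A differential operator killing every function vanishes: `D ⊗ 1` is then zero in `H ⊗_R H`,
and `id ⊗_R ε` sends it back to `D`. -/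
theorem μ_injective (hbl : ∀ (a : S) (h : A) (b : S), μ (ι a * h) b = a * μ h b)
    (hε : ∀ D : A, ε D = μ D 1)
    (hfaith2 : ∀ u : A ⊗[K] A,
      (∀ f g : S, ev2 K μ u f g = 0) → prQ K (fun a => ι a) (fun a => ι a) u = 0) :
    Function.Injective μ := by
  refine (injective_iff_map_eq_zero μ).mpr fun D hD => ?_
  have hrel : D ⊗ₜ[K] (1 : A) ∈ relQ K (fun a => ι a) (fun a => ι a) :=
    (Submodule.Quotient.mk_eq_zero _).mp (hfaith2 _ fun f g => by simp [ev2_tmul, hD])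
  simpa [e2, hε] using e2_eq_zero_of_mem_relQ hbl hε hrel

theorem e1_eq_ite_iff (hbl : ∀ (a : S) (h : A) (b : S), μ (ι a * h) b = a * μ h b)
    (hε : ∀ D : A, ε D = μ D 1)
    (hfaith2 : ∀ u : A ⊗[K] A,
      (∀ f g : S, ev2 K μ u f g = 0) → prQ K (fun a => ι a) (fun a => ι a) u = 0)
    (u : A ⊗[K] A) (n : ℕ) :
    e1 K ι.toLinearMap ε u = (if n = 0 then 1 else 0) ↔
      ∀ x : S, ev2 K μ u 1 x = if n = 0 then x else 0 := by
  rw [← (μ_injective hbl hε hfaith2).eq_iff, LinearMap.ext_iff]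
  simp only [μ_e1_apply hbl hε]
  split_ifs <;> simp

theorem e2_eq_ite_iff (hbl : ∀ (a : S) (h : A) (b : S), μ (ι a * h) b = a * μ h b)
    (hε : ∀ D : A, ε D = μ D 1)
    (hfaith2 : ∀ u : A ⊗[K] A,
      (∀ f g : S, ev2 K μ u f g = 0) → prQ K (fun a => ι a) (fun a => ι a) u = 0)
    (u : A ⊗[K] A) (n : ℕ) :
    e2 K ι.toLinearMap ε u = (if n = 0 then 1 else 0) ↔
      ∀ x : S, ev2 K μ u x 1 = if n = 0 then x else 0 := by
  rw [← (μ_injective hbl hε hfaith2).eq_iff, LinearMap.ext_iff]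
  simp only [μ_e2_apply hbl hε]
  split_ifs <;> simp

end DifferentialOperators

theorem statement8_general
    (k H R : Type) [CommRing k] [Ring H] [Algebra k H] [CommRing R] [Algebra k R]
    (ι : R →ₐ[k] H) (μ : H →ₐ[k] Module.End k R)
    -- the anchor extends the multiplication action of functions:
    (hbl : ∀ (a : R) (h : H) (b : R), μ (ι a * h) b = a * μ h b)
    -- the counit is `D ↦ D(1)`:
    (ε : H →ₗ[k] R) (hε : ∀ D : H, ε D = μ D 1)
    -- the coproduct of a differential operator is determined by `Δ(D)(f,g) = D(fg)`:
    (Δ' : H →ₗ[k] H ⊗[k] H)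
    (hΔ : ∀ (D : H) (f g : R), ev2 k μ (Δ' D) f g = μ D (f * g))
    -- bidifferential and tridifferential operators are determined by their values
    -- on functions (modulo the relations defining `⊗_R`):
    (hfaith2 : ∀ u : H ⊗[k] H,
      (∀ f g : R, ev2 k μ u f g = 0) → prQ k (fun a => ι a) (fun a => ι a) u = 0)
    (hfaith3 : ∀ u : (H ⊗[k] H) ⊗[k] H,
      (∀ f g h : R, ev3 k μ u f g h = 0) →
        prQ3 k (fun a => ι a) (fun a => ι a) u = 0)
    -- the formal series `F = 1⊗1 + ℏB₁ + ⋯`: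
    (B : ℕ → H ⊗[k] H) :
    -- `F` is a twistor (cocycle and counit identities, order by order in `ℏ`;
    -- invertibility is automatic since `B 0 = 1 ⊗ 1`)  ↔  `*_ℏ` is a star product:
    (((∀ n : ℕ,
        prQ3 k (fun a => ι a) (fun a => ι a)
          (∑ p ∈ Finset.HasAntidiagonal.antidiagonal n,
            DL k Δ' (B p.1) * (B p.2 ⊗ₜ[k] (1 : H)))
        = prQ3 k (fun a => ι a) (fun a => ι a)
          (∑ p ∈ Finset.HasAntidiagonal.antidiagonal n,
            DR k Δ' (B p.1) * aInv k ((1 : H) ⊗ₜ[k] B p.2)))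
      ∧ (∀ n : ℕ,
          e1 k ι.toLinearMap ε (B n) = (if n = 0 then (1 : H) else 0)
          ∧ e2 k ι.toLinearMap ε (B n) = (if n = 0 then (1 : H) else 0)))
    ↔
    ((∀ f g h : ℕ → R,
        starC k μ B (starC k μ B f g) h = starC k μ B f (starC k μ B g h))
      ∧ (∀ f : ℕ → R,
          starC k μ B (fun n => if n = 0 then 1 else 0) f = f
          ∧ starC k μ B f (fun n => if n = 0 then 1 else 0) = f))) := by
  have hstar : starC k μ B = gradedStar fun n => ev2 k μ (B n) := rfl
  have hunit : (fun n : ℕ => if n = 0 then (1 : R) else 0) = Pi.single 0 1 :=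
    funext fun n => (Pi.single_apply 0 1 n).symm
  rw [hstar, hunit, gradedStar_assoc_iff]
  refine and_congr (forall_congr' fun n => ?_) ?_
  · rw [prQ3_eq_iff hbl hfaith3]
    simp only [map_sum, LinearMap.sum_apply, ev3_DL_mul_tmul_one hΔ, ev3_DR_mul_aInv_one_tmul hΔ]
  · simp only [forall_and, e1_eq_ite_iff hbl hε hfaith2, e2_eq_ite_iff hbl hε hfaith2,
      gradedStar_single_left_eq_self_iff, gradedStar_single_right_eq_self_iff]

/-- Example 4.1.  Let `P` be a smooth manifold, `H = D(P)` the
algebra of differential operators, `R = C^∞(P)` (axiomatized here by: `R` is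
commutative, `ι : R → H` realizes functions as operators, the anchor `μ` is the
tautological action, `Δ(D)(f,g) = D(fg)`, `ε(D) = D(1)`, and elements of
`H ⊗_R H`, `H ⊗_R H ⊗_R H` are faithfully determined by their action on
functions).  A formal series `F = 1 ⊗ 1 + ℏB₁ + ℏ²B₂ + ⋯` of bidifferential
operators is a twistor of the Hopf algebroid `D[[ℏ]]` if and only if
`f *_ℏ g := F(f, g)` is associative on `R[[ℏ]]` with unit the constant function
`1`, i.e. `*_ℏ` is a star product on `P`. -/
theorem statement8
    (k H R : Type) [CommRing k] [Ring H] [Algebra k H] [CommRing R] [Algebra k R]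
    (ι : R →ₐ[k] H) (μ : H →ₐ[k] Module.End k R)
    -- the anchor extends the multiplication action of functions:
    (hμι : ∀ a b : R, μ (ι a) b = a * b)
    (hbl : ∀ (a : R) (h : H) (b : R), μ (ι a * h) b = a * μ h b)
    -- the counit is `D ↦ D(1)`:
    (ε : H →ₗ[k] R) (hε : ∀ D : H, ε D = μ D 1)
    -- the coproduct of a differential operator is determined by `Δ(D)(f,g) = D(fg)`:
    (Δ' : H →ₗ[k] H ⊗[k] H)
    (hΔ : ∀ (D : H) (f g : R), ev2 k μ (Δ' D) f g = μ D (f * g))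
    -- bidifferential and tridifferential operators are determined by their values
    -- on functions (modulo the relations defining `⊗_R`):
    (hfaith2 : ∀ u : H ⊗[k] H,
      (∀ f g : R, ev2 k μ u f g = 0) → prQ k (fun a => ι a) (fun a => ι a) u = 0)
    (hfaith3 : ∀ u : (H ⊗[k] H) ⊗[k] H,
      (∀ f g h : R, ev3 k μ u f g h = 0) →
        prQ3 k (fun a => ι a) (fun a => ι a) u = 0)
    -- the formal series `F = 1⊗1 + ℏB₁ + ⋯`:
    (B : ℕ → H ⊗[k] H) (hB0 : B 0 = 1) :
    -- `F` is a twistor (cocycle and counit identities, order by order in `ℏ`;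
    -- invertibility is automatic since `B 0 = 1 ⊗ 1`)  ↔  `*_ℏ` is a star product:
    (((∀ n : ℕ,
        prQ3 k (fun a => ι a) (fun a => ι a)
          (∑ p ∈ Finset.HasAntidiagonal.antidiagonal n,
            DL k Δ' (B p.1) * (B p.2 ⊗ₜ[k] (1 : H)))
        = prQ3 k (fun a => ι a) (fun a => ι a)
          (∑ p ∈ Finset.HasAntidiagonal.antidiagonal n,
            DR k Δ' (B p.1) * aInv k ((1 : H) ⊗ₜ[k] B p.2)))
      ∧ (∀ n : ℕ,
          e1 k ι.toLinearMap ε (B n) = (if n = 0 then (1 : H) else 0)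
          ∧ e2 k ι.toLinearMap ε (B n) = (if n = 0 then (1 : H) else 0)))
    ↔
    ((∀ f g h : ℕ → R,
        starC k μ B (starC k μ B f g) h = starC k μ B f (starC k μ B g h))
      ∧ (∀ f : ℕ → R,
          starC k μ B (fun n => if n = 0 then 1 else 0) f = f
          ∧ starC k μ B f (fun n => if n = 0 then 1 else 0) = f))) :=
  statement8_general k H R ι μ hbl ε hε Δ' hΔ hfaith2 hfaith3 B

end
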